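/- Let C be an essentially small quasi-abelian category with a rank function rk and a slope function μ. Then every nonzero object N of C has a universal destabilizing subobject: there exists a nonzero strict subobject M of N such that (i) μ(M') ≤ μ(M) for every nonzero strict subobject M' of N, and (ii) every nonzero strict subobject M' of N with μ(M') = μ(M) factors through M. Moreover M is unique as a subobject of N, and M is semistable. -/
import Mathlib


open CategoryTheory CategoryTheory.Limits

universe v u

namespace SlopeFiltrations

variable {C : Type u} [Category.{v} C]

section ZeroMorphisms

variable [HasZeroMorphisms C]

/-- A morphism is a *strict monomorphism* if it is a kernel of some morphism. -/
def IsStrictMono {M N : C} (f : M ⟶ N) : Prop :=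
  ∃ (Z : C) (g : N ⟶ Z) (w : f ≫ g = 0), Nonempty (IsLimit (KernelFork.ofι f w))

/-- A morphism is a *strict epimorphism* if it is a cokernel of some morphism. -/
def IsStrictEpi {M N : C} (f : M ⟶ N) : Prop :=
  ∃ (Z : C) (g : Z ⟶ M) (w : g ≫ f = 0), Nonempty (IsColimit (CokernelCofork.ofπ f w))

/-- `0 ⟶ M ⟶ N ⟶ P ⟶ 0` is a short exact sequence: `f` is a kernel of `g` and `g` is a
cokernel of `f`. -/
def IsShortExactSeq {M N P : C} (f : M ⟶ N) (g : N ⟶ P) : Prop :=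
  ∃ w : f ≫ g = 0,
    Nonempty (IsLimit (KernelFork.ofι f w)) ∧ Nonempty (IsColimit (CokernelCofork.ofπ g w))

end ZeroMorphisms

/-- A *quasi-abelian category* is an additive category with kernels and cokernels in which
every pullback of a strict epimorphism is a strict epimorphism and every pushout of a strict
monomorphism is a strict monomorphism. -/
class IsQuasiAbelian (C : Type u) [Category.{v} C] [Preadditive C]
    [HasKernels C] [HasCokernels C] : Prop where
  strictEpi_of_pullback : ∀ {P X Y Z : C} {fst : P ⟶ X} {snd : P ⟶ Y} {f : X ⟶ Z} {g : Y ⟶ Z},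
    IsPullback fst snd f g → IsStrictEpi f → IsStrictEpi snd
  strictMono_of_pushout : ∀ {P X Y Z : C} {f : P ⟶ X} {g : P ⟶ Y} {inl : X ⟶ Z} {inr : Y ⟶ Z},
    IsPushout f g inl inr → IsStrictMono f → IsStrictMono inr

/-- A *rank function*: a map to `ℕ`, additive on short exact sequences, vanishing exactly on
zero objects. -/
structure RankFunction (C : Type u) [Category.{v} C] [HasZeroMorphisms C] where
  rk : C → ℕ
  rk_zero_iff : ∀ X : C, rk X = 0 ↔ IsZero X
  additive : ∀ {M N P : C} (f : M ⟶ N) (g : N ⟶ P), IsShortExactSeq f g →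
    rk N = rk M + rk P

/-- A *slope function* relative to a rank function: `μ M ≤ μ N` for epi-monic `M ⟶ N`, and
the degree `deg = μ · rk` is additive on short exact sequences. -/
structure SlopeFunction (C : Type u) [Category.{v} C] [HasZeroMorphisms C]
    (R : RankFunction C) where
  μ : C → ℚ
  le_of_mono_epi : ∀ {M N : C} (f : M ⟶ N), Mono f → Epi f →
    ¬ IsZero M → ¬ IsZero N → μ M ≤ μ N
  deg_additive : ∀ {M N P : C} (f : M ⟶ N) (g : N ⟶ P), IsShortExactSeq f g →
    μ N * (R.rk N : ℚ) = μ M * (R.rk M : ℚ) + μ P * (R.rk P : ℚ)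

variable {C : Type u} [Category.{v} C]

/-- A nonzero object `N` is *semistable* (for the slope function `μ`) if `μ M ≤ μ N` for every
nonzero subobject `M` of `N`. -/
def Semistable [HasZeroMorphisms C] (μ : C → ℚ) (N : C) : Prop :=
  ¬ IsZero N ∧ ∀ ⦃M : C⦄ (m : M ⟶ N), Mono m → ¬ IsZero M → μ M ≤ μ N

/-- Semistable of slope `lam`. -/
def SemistableOfSlope [HasZeroMorphisms C] (μ : C → ℚ) (lam : ℚ) (N : C) : Prop :=
  Semistable μ N ∧ μ N = lam

/-- A nonzero object `N` is *stable* if `μ M < μ N` for every nonzero subobject `M` of `N`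
whose inclusion is not an isomorphism. -/
def Stable [HasZeroMorphisms C] (μ : C → ℚ) (N : C) : Prop :=
  ¬ IsZero N ∧ ∀ ⦃M : C⦄ (m : M ⟶ N), Mono m → ¬ IsZero M → ¬ IsIso m → μ M < μ N

/-- `m : M ⟶ N` is a *universal destabilizing subobject* of `N`: a nonzero strict subobject
such that (i) `μ M' ≤ μ M` for every nonzero strict subobject `M'` of `N`, and (ii) every
nonzero strict subobject `M'` of `N` with `μ M' = μ M` factors through `m`. -/
def IsUniversalDestabilizing [HasZeroMorphisms C] (μ : C → ℚ) {M N : C} (m : M ⟶ N) : Prop :=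
  IsStrictMono m ∧ ¬ IsZero M ∧
    (∀ ⦃M' : C⦄ (m' : M' ⟶ N), IsStrictMono m' → ¬ IsZero M' → μ M' ≤ μ M) ∧
    (∀ ⦃M' : C⦄ (m' : M' ⟶ N), IsStrictMono m' → ¬ IsZero M' → μ M' = μ M →
      ∃ u : M' ⟶ M, u ≫ m = m')


section Aux

variable [Preadditive C] [HasKernels C] [HasCokernels C]

set_option linter.unusedSectionVars false

theorem IsStrictMono.mono' {M N : C} {f : M ⟶ N} (h : IsStrictMono f) : Mono f := by
  obtain ⟨Z, g, w, ⟨hl⟩⟩ := h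
  exact mono_of_isLimit_fork hl

theorem IsStrictEpi.epi' {M N : C} {f : M ⟶ N} (h : IsStrictEpi f) : Epi f := by
  obtain ⟨Z, g, w, ⟨hl⟩⟩ := h
  exact epi_of_isColimit_cofork hl

theorem isStrictMono_of_isIso {M N : C} (f : M ⟶ N) [IsIso f] : IsStrictMono f := by
  refine ⟨N, 0, by simp, ⟨KernelFork.IsLimit.ofι f (by simp)
    (fun g' _ => g' ≫ inv f) (fun g' e => by simp) fun g' e m hm => by
      simp [← hm]⟩⟩

theorem isStrictMono_id (N : C) : IsStrictMono (𝟙 N) := isStrictMono_of_isIso _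

theorem isStrictMono_kernelι {X Y : C} (g : X ⟶ Y) : IsStrictMono (kernel.ι g) :=
  ⟨Y, g, kernel.condition g, ⟨kernelIsKernel g⟩⟩

theorem isStrictEpi_cokernelπ {X Y : C} (g : X ⟶ Y) : IsStrictEpi (cokernel.π g) :=
  ⟨X, g, cokernel.condition g, ⟨cokernelIsCokernel g⟩⟩

/-- A strict mono is the kernel of its cokernel. -/
theorem IsStrictMono.isLimitCoker {M N : C} {m : M ⟶ N} (h : IsStrictMono m) :
    Nonempty (IsLimit (KernelFork.ofι m (cokernel.condition m))) := by
  obtain ⟨Z, g, w, ⟨hl⟩⟩ := h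
  have hm : Mono m := mono_of_isLimit_fork hl
  refine ⟨KernelFork.IsLimit.ofι m _ (fun {W} t ht => ?_) (fun {W} t ht => ?_) ?_⟩
  · have hg : g = cokernel.π m ≫ cokernel.desc m g w := by simp
    exact (KernelFork.IsLimit.lift' hl t (by rw [hg, ← Category.assoc, ht, zero_comp])).1
  · exact (KernelFork.IsLimit.lift' hl t _).2
  · intro W t ht u hu
    apply (cancel_mono m).mp
    rw [hu]
    exact ((KernelFork.IsLimit.lift' hl t _).2).symm

theorem IsStrictMono.ses {M N : C} {m : M ⟶ N} (h : IsStrictMono m) :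
    IsShortExactSeq m (cokernel.π m) :=
  ⟨cokernel.condition m, h.isLimitCoker, ⟨cokernelIsCokernel m⟩⟩

/-- If `f ≫ g` is a strict mono and `g` is a mono, then `f` is a strict mono. -/
theorem isStrictMono_of_comp {A B D : C} {f : A ⟶ B} {g : B ⟶ D}
    (hfg : IsStrictMono (f ≫ g)) (hg : Mono g) : IsStrictMono f := by
  obtain ⟨Z, h, w, ⟨hl⟩⟩ := hfg
  have hmono : Mono (f ≫ g) := mono_of_isLimit_fork hl
  have hf : Mono f := mono_of_mono f g
  refine ⟨Z, g ≫ h, by rw [← Category.assoc]; exact w, ⟨KernelFork.IsLimit.ofι f _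
    (fun {W} t ht => (KernelFork.IsLimit.lift' hl (t ≫ g) (by
      rw [Category.assoc]; exact ht)).1) (fun {W} t ht => ?_) ?_⟩⟩
  · have h2 := (KernelFork.IsLimit.lift' hl (t ≫ g) (by rw [Category.assoc]; exact ht)).2
    simp only [Fork.ι_ofι] at h2
    rw [← Category.assoc] at h2
    exact (cancel_mono g).mp h2
  · intro W t ht u hu
    apply (cancel_mono f).mp
    rw [hu]
    have h2 := (KernelFork.IsLimit.lift' hl (t ≫ g) (by rw [Category.assoc]; exact ht)).2
    simp only [Fork.ι_ofι] at h2
    apply (cancel_mono g).mp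
    rw [Category.assoc, h2]

end Aux

section Helper
variable [Preadditive C] [HasKernels C] [HasCokernels C]
set_option linter.unusedSectionVars false

theorem isLimit_of_mono_of_factor {M N Z : C} {f : M ⟶ N} {g : N ⟶ Z} (w : f ≫ g = 0)
    (hm : Mono f) (h : ∀ {T : C} (t : T ⟶ N), t ≫ g = 0 → ∃ s : T ⟶ M, s ≫ f = t) :
    Nonempty (IsLimit (KernelFork.ofι f w)) := by
  refine ⟨KernelFork.IsLimit.ofι f w (fun {T} t ht => (h t ht).choose)
    (fun {T} t ht => (h t ht).choose_spec) ?_⟩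
  intro T t ht s hs
  apply (cancel_mono f).mp
  rw [hs, (h t ht).choose_spec]

theorem isStrictMono_of_mono_of_factor {M N Z : C} (f : M ⟶ N) (g : N ⟶ Z) (w : f ≫ g = 0)
    (hm : Mono f) (h : ∀ {T : C} (t : T ⟶ N), t ≫ g = 0 → ∃ s : T ⟶ M, s ≫ f = t) :
    IsStrictMono f :=
  ⟨Z, g, w, isLimit_of_mono_of_factor w hm h⟩

end Helper
section Aux2

variable [Preadditive C] [HasFiniteBiproducts C] [HasKernels C] [HasCokernels C]

set_option linter.unusedSectionVars false

instance (priority := 100) hasPushouts' : HasPushouts C := by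
  have := Preadditive.hasCoequalizers_of_hasCokernels (C := C)
  exact hasPushouts_of_hasBinaryCoproducts_of_hasCoequalizers C

instance (priority := 100) hasPullbacks' : HasPullbacks C := by
  have := Preadditive.hasEqualizers_of_hasKernels (C := C)
  exact hasPullbacks_of_hasBinaryProducts_of_hasEqualizers C

/-- The canonical map to the image (kernel of the cokernel). -/
noncomputable def toIm {M N : C} (f : M ⟶ N) : M ⟶ kernel (cokernel.π f) :=
  kernel.lift (cokernel.π f) f (cokernel.condition f)

@[simp] theorem toIm_ι {M N : C} (f : M ⟶ N) : toIm f ≫ kernel.ι (cokernel.π f) = f :=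
  kernel.lift_ι _ _ _

/-- The canonical map from the coimage (cokernel of the kernel). -/
noncomputable def fromCoim {M N : C} (f : M ⟶ N) : cokernel (kernel.ι f) ⟶ N :=
  cokernel.desc (kernel.ι f) f (kernel.condition f)

@[simp] theorem π_fromCoim {M N : C} (f : M ⟶ N) :
    cokernel.π (kernel.ι f) ≫ fromCoim f = f := cokernel.π_desc _ _ _

variable [IsQuasiAbelian C]

theorem epi_toIm {M N : C} (f : M ⟶ N) : Epi (toIm f) := by
  apply Preadditive.epi_of_cancel_zero
  intro T t ht
  have hinr : Mono (pushout.inr (kernel.ι (cokernel.π f)) t) :=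
    (IsQuasiAbelian.strictMono_of_pushout
      (IsPushout.of_hasPushout (kernel.ι (cokernel.π f)) t) (isStrictMono_kernelι _)).mono'
  have h1 : f ≫ pushout.inl (kernel.ι (cokernel.π f)) t = 0 := by
    have h0 : (toIm f ≫ kernel.ι (cokernel.π f)) ≫ pushout.inl (kernel.ι (cokernel.π f)) t
        = 0 := by
      rw [Category.assoc, pushout.condition, ← Category.assoc, ht, zero_comp]
    simpa using h0
  have h2 : kernel.ι (cokernel.π f) ≫ pushout.inl (kernel.ι (cokernel.π f)) t = 0 := by
    have heq : pushout.inl (kernel.ι (cokernel.π f)) t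
        = cokernel.π f ≫ cokernel.desc f _ h1 := by simp
    rw [heq, ← Category.assoc, kernel.condition, zero_comp]
  have h3 : t ≫ pushout.inr (kernel.ι (cokernel.π f)) t = 0 := by
    rw [← pushout.condition, h2]
  exact zero_of_comp_mono _ h3

theorem mono_fromCoim {M N : C} (f : M ⟶ N) : Mono (fromCoim f) := by
  apply Preadditive.mono_of_cancel_zero
  intro T t ht
  have hsnd : Epi (pullback.snd (cokernel.π (kernel.ι f)) t) :=
    (IsQuasiAbelian.strictEpi_of_pullback
      (IsPullback.of_hasPullback (cokernel.π (kernel.ι f)) t) (isStrictEpi_cokernelπ _)).epi'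
  have h1 : pullback.fst (cokernel.π (kernel.ι f)) t ≫ f = 0 := by
    have h0 : pullback.fst (cokernel.π (kernel.ι f)) t
        ≫ (cokernel.π (kernel.ι f) ≫ fromCoim f) = 0 := by
      rw [← Category.assoc, pullback.condition, Category.assoc, ht, comp_zero]
    simpa using h0
  have h2 : pullback.fst (cokernel.π (kernel.ι f)) t ≫ cokernel.π (kernel.ι f) = 0 := by
    have heq : pullback.fst (cokernel.π (kernel.ι f)) t = kernel.lift f _ h1 ≫ kernel.ι f := by
      simp
    rw [heq, Category.assoc, cokernel.condition, comp_zero]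
  have h3 : pullback.snd (cokernel.π (kernel.ι f)) t ≫ t = 0 := by
    rw [← pullback.condition, h2]
  exact zero_of_epi_comp _ h3

/-- Composition of strict monos is a strict mono. -/
theorem IsStrictMono.comp {A B D : C} {u : A ⟶ B} {v : B ⟶ D}
    (hu : IsStrictMono u) (hv : IsStrictMono v) : IsStrictMono (u ≫ v) := by
  have hum : Mono u := hu.mono'
  have hvm : Mono v := hv.mono'
  have huv : Mono (u ≫ v) := mono_comp u v
  set c := cokernel.π u with hc
  have sq := IsPushout.of_hasPushout v c
  have hinr : Mono (pushout.inr v c) :=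
    (IsQuasiAbelian.strictMono_of_pushout sq hv).mono'
  have w : (u ≫ v) ≫ pushout.inl v c = 0 := by
    rw [Category.assoc, pushout.condition, ← Category.assoc, hc, cokernel.condition, zero_comp]
  obtain ⟨Z, d, wd, ⟨hld⟩⟩ := hv
  obtain ⟨hlu⟩ := hu.isLimitCoker
  refine isStrictMono_of_mono_of_factor _ _ w huv ?_
  intro T t ht
  have htd : t ≫ d = 0 := by
    have he : pushout.inl v c ≫ pushout.desc d 0 (by rw [wd, comp_zero]) = d :=
      pushout.inl_desc _ _ _
    rw [← he, ← Category.assoc, ht, zero_comp]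
  obtain ⟨s, hs⟩ := KernelFork.IsLimit.lift' hld t htd
  simp only [Fork.ι_ofι] at hs
  have hsc : s ≫ c = 0 := by
    have h0 : (s ≫ c) ≫ pushout.inr v c = 0 := by
      rw [Category.assoc, ← pushout.condition, ← Category.assoc, hs, ht]
    exact (cancel_mono (pushout.inr v c)).mp (by rw [h0, zero_comp])
  obtain ⟨a, ha⟩ := KernelFork.IsLimit.lift' hlu s hsc
  simp only [Fork.ι_ofι] at ha
  exact ⟨a, by rw [← Category.assoc, ha, hs]⟩

end Aux2
section Aux3

variable [Preadditive C] [HasFiniteBiproducts C] [HasKernels C] [HasCokernels C]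

set_option linter.unusedSectionVars false

attribute [local instance] hasBinaryBiproducts_of_finite_biproducts

theorem isZero_cokernel_of_epi {M N : C} (f : M ⟶ N) [Epi f] : IsZero (cokernel f) := by
  have hπ : cokernel.π f = 0 := zero_of_epi_comp f (by simp)
  rw [IsZero.iff_id_eq_zero]
  apply (cancel_epi (cokernel.π f)).mp
  simp [hπ]

theorem isZero_of_mono_zero {M N : C} (h : Mono (0 : M ⟶ N)) : IsZero M := by
  rw [IsZero.iff_id_eq_zero]
  exact (cancel_mono (0 : M ⟶ N)).mp (by simp)

theorem isZero_of_mono {M N : C} (f : M ⟶ N) (hf : Mono f) (h : IsZero N) : IsZero M := by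
  have : f = 0 := h.eq_of_tgt f 0
  rw [this] at hf
  exact isZero_of_mono_zero hf

theorem not_isZero_of_mono {M N : C} (f : M ⟶ N) (hf : Mono f) (h : ¬ IsZero M) : ¬ IsZero N :=
  fun hN => h (isZero_of_mono f hf hN)

theorem isIso_of_isZero_cokernel {M N : C} {m : M ⟶ N} (h : IsStrictMono m)
    (hz : IsZero (cokernel m)) : IsIso m := by
  obtain ⟨hl⟩ := h.isLimitCoker
  have hm : Mono m := h.mono'
  obtain ⟨u, hu⟩ := KernelFork.IsLimit.lift' hl (𝟙 N) (hz.eq_of_tgt _ 0)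
  simp only [Fork.ι_ofι] at hu
  refine ⟨u, ?_, hu⟩
  apply (cancel_mono m).mp
  rw [Category.assoc, hu]
  simp

theorem ses_biprod (X Y : C) :
    IsShortExactSeq (biprod.inl : X ⟶ X ⊞ Y) (biprod.snd : X ⊞ Y ⟶ Y) := by
  refine ⟨biprod.inl_snd, ?_, ?_⟩
  · refine isLimit_of_mono_of_factor _ inferInstance ?_
    intro T t ht
    refine ⟨t ≫ biprod.fst, ?_⟩
    have htot : biprod.fst ≫ biprod.inl + biprod.snd ≫ biprod.inr = 𝟙 (X ⊞ Y) := biprod.total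
    have h4 : t ≫ (biprod.fst ≫ biprod.inl) + t ≫ (biprod.snd ≫ biprod.inr) = t := by
      rw [← Preadditive.comp_add, htot, Category.comp_id]
    have h5 : t ≫ (biprod.snd ≫ (biprod.inr : Y ⟶ X ⊞ Y)) = 0 := by rw [← Category.assoc, ht, zero_comp]
    rw [Category.assoc]
    conv_rhs => rw [← h4]
    rw [h5, add_zero]
  · refine ⟨CokernelCofork.IsColimit.ofπ _ _ (fun {W} t ht => biprod.inr ≫ t)
      (fun {W} t ht => ?_) ?_⟩
    · have htot : biprod.fst ≫ biprod.inl + biprod.snd ≫ biprod.inr = 𝟙 (X ⊞ Y) := biprod.total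
      have h4 : (biprod.fst ≫ biprod.inl) ≫ t + (biprod.snd ≫ biprod.inr) ≫ t = t := by
        rw [← Preadditive.add_comp, htot, Category.id_comp]
      have h5 : ((biprod.fst : X ⊞ Y ⟶ X) ≫ biprod.inl) ≫ t = 0 := by rw [Category.assoc, ht, comp_zero]
      rw [← Category.assoc]
      conv_rhs => rw [← h4]
      rw [h5, zero_add]
    · intro W t ht s hs
      show s = biprod.inr ≫ t
      rw [← hs, ← Category.assoc, biprod.inr_snd, Category.id_comp]

end Aux3

section Rk

variable [Preadditive C] [HasFiniteBiproducts C] [HasKernels C] [HasCokernels C]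
variable {R : RankFunction C} (S : SlopeFunction C R)

set_option linter.unusedSectionVars false

/-- The degree function. -/
def dg (X : C) : ℚ := S.μ X * (R.rk X : ℚ)

theorem rk_pos {X : C} (h : ¬ IsZero X) : 0 < R.rk X :=
  Nat.pos_of_ne_zero (fun h0 => h ((R.rk_zero_iff X).mp h0))

theorem dg_isZero {X : C} (h : IsZero X) : dg S X = 0 := by
  have : R.rk X = 0 := (R.rk_zero_iff X).mpr h
  simp [dg, this]

theorem dg_additive {M N P : C} (f : M ⟶ N) (g : N ⟶ P) (h : IsShortExactSeq f g) :
    dg S N = dg S M + dg S P := S.deg_additive f g h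

theorem rk_eq_of_iso {A B : C} (f : A ⟶ B) [IsIso f] : R.rk A = R.rk B := by
  have hses := (isStrictMono_of_isIso (C := C) f).ses
  have h1 := R.additive _ _ hses
  have h2 : R.rk (cokernel f) = 0 := (R.rk_zero_iff _).mpr (isZero_cokernel_of_epi f)
  omega

theorem dg_eq_of_iso {A B : C} (f : A ⟶ B) [IsIso f] : dg S A = dg S B := by
  have hses := (isStrictMono_of_isIso (C := C) f).ses
  have h1 := S.deg_additive _ _ hses
  have h2 : dg S (cokernel f) = 0 := dg_isZero S (isZero_cokernel_of_epi f)
  simp only [dg] at *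
  rw [h1, h2, add_zero]

theorem μ_eq_of_iso {A B : C} (f : A ⟶ B) [IsIso f] (hA : ¬ IsZero A) : S.μ A = S.μ B := by
  have hB : ¬ IsZero B := fun h => hA (isZero_of_mono f inferInstance h)
  exact le_antisymm (S.le_of_mono_epi f inferInstance inferInstance hA hB)
    (S.le_of_mono_epi (inv f) inferInstance inferInstance hB hA)

theorem rk_strictMono {M N : C} {m : M ⟶ N} (h : IsStrictMono m) :
    R.rk N = R.rk M + R.rk (cokernel m) := R.additive _ _ h.ses

theorem dg_strictMono {M N : C} {m : M ⟶ N} (h : IsStrictMono m) :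
    dg S N = dg S M + dg S (cokernel m) := S.deg_additive _ _ h.ses

theorem rk_le_of_strictMono {M N : C} {m : M ⟶ N} (h : IsStrictMono m) :
    R.rk M ≤ R.rk N := by
  have := rk_strictMono (R := R) h
  omega

theorem isIso_of_rk_eq {M N : C} {m : M ⟶ N} (h : IsStrictMono m)
    (hr : R.rk M = R.rk N) : IsIso m := by
  apply isIso_of_isZero_cokernel h
  apply (R.rk_zero_iff _).mp
  have := rk_strictMono (R := R) h
  omega

theorem mu_le_of_dg_le {X : C} {b : ℚ} (hb : 0 ≤ b) (hX : ¬ IsZero X)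
    (hdg : dg S X ≤ b) : S.μ X ≤ b := by
  simp only [dg] at hdg
  rcases le_or_gt (S.μ X) 0 with h | h
  · linarith
  · have hr : (1 : ℚ) ≤ (R.rk X : ℚ) := by
      have := rk_pos (R := R) hX
      exact_mod_cast this
    have h2 : S.μ X * 1 ≤ S.μ X * (R.rk X : ℚ) :=
      mul_le_mul_of_nonneg_left hr (le_of_lt h)
    rw [mul_one] at h2
    linarith

end Rk
section Sum

variable [Preadditive C] [HasFiniteBiproducts C] [HasKernels C] [HasCokernels C]
variable [IsQuasiAbelian C]

set_option linter.unusedSectionVars false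
set_option maxHeartbeats 1000000

attribute [local instance] hasBinaryBiproducts_of_finite_biproducts

/-- The sum construction: given two strict subobjects `M₁, M₂` of `N`, produce the
intersection `K`, the coimage `Q` and the image (sum) `I` of `M₁ ⊞ M₂ ⟶ N`, with all the
data needed for slope estimates. -/
theorem sum_construction {R : RankFunction C} (S : SlopeFunction C R)
    {M₁ M₂ N : C} {m₁ : M₁ ⟶ N} {m₂ : M₂ ⟶ N}
    (h₁ : IsStrictMono m₁) (h₂ : IsStrictMono m₂) (hM₁ : ¬ IsZero M₁) :
    ∃ (K Q I : C) (k₁ : K ⟶ M₁) (kn : K ⟶ N) (u₁ : M₁ ⟶ I) (iι : I ⟶ N),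
      IsStrictMono k₁ ∧ IsStrictMono kn ∧ IsStrictMono u₁ ∧ IsStrictMono iι ∧
      u₁ ≫ iι = m₁ ∧
      (R.rk M₁ + R.rk M₂ = R.rk K + R.rk Q) ∧
      (dg S M₁ + dg S M₂ = dg S K + dg S Q) ∧
      ¬ IsZero Q ∧ ¬ IsZero I ∧ S.μ Q ≤ S.μ I ∧
      (R.rk K = R.rk M₁ → ∃ v : M₁ ⟶ M₂, IsStrictMono v ∧ v ≫ m₂ = m₁) ∧
      (R.rk I = R.rk M₁ → ∃ w : M₂ ⟶ M₁, IsStrictMono w ∧ w ≫ m₁ = m₂) := by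
  have hm₁ : Mono m₁ := h₁.mono'
  have hm₂ : Mono m₂ := h₂.mono'
  set f : M₁ ⊞ M₂ ⟶ N := biprod.desc m₁ (-m₂) with hf
  have hinlf : biprod.inl ≫ f = m₁ := biprod.inl_desc _ _
  have hinrf : biprod.inr ≫ f = -m₂ := biprod.inr_desc _ _
  -- basic relation
  have hrel : (kernel.ι f ≫ biprod.fst) ≫ m₁ = (kernel.ι f ≫ biprod.snd) ≫ m₂ := by
    have h0 : kernel.ι f ≫ (biprod.fst ≫ m₁ + biprod.snd ≫ (-m₂)) = 0 := by
      rw [← biprod.desc_eq]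
      exact kernel.condition f
    simp only [Preadditive.comp_add, Preadditive.comp_neg, ← Category.assoc] at h0
    rw [add_neg_eq_zero] at h0
    exact h0
  -- k₁ is mono
  have hk₁mono : Mono (kernel.ι f ≫ biprod.fst) := by
    apply Preadditive.mono_of_cancel_zero
    intro T t ht
    have h2 : (t ≫ (kernel.ι f ≫ biprod.snd)) ≫ m₂ = 0 := by
      rw [Category.assoc, ← hrel, ← Category.assoc, ← Category.assoc] at *
      rw [ht, zero_comp]
    have h3 : t ≫ (kernel.ι f ≫ biprod.snd) = 0 := (cancel_mono m₂).mp (by rw [h2, zero_comp])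
    have h4 : t ≫ kernel.ι f = 0 := by
      apply biprod.hom_ext
      · rw [Category.assoc, zero_comp, ← Category.assoc]
        rw [← Category.assoc] at ht
        exact ht
      · rw [Category.assoc, zero_comp, ← Category.assoc]
        rw [← Category.assoc] at h3
        exact h3
    exact (cancel_mono (kernel.ι f)).mp (by rw [h4, zero_comp])
  -- k₁ is strict mono
  have hk₁strict : IsStrictMono (kernel.ι f ≫ biprod.fst) := by
    refine isStrictMono_of_mono_of_factor _ (m₁ ≫ cokernel.π m₂) ?_ hk₁mono ?_
    · rw [← Category.assoc, hrel, Category.assoc, cokernel.condition, comp_zero]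
    · intro T t ht
      obtain ⟨hl₂⟩ := h₂.isLimitCoker
      obtain ⟨s, hs⟩ := KernelFork.IsLimit.lift' hl₂ (t ≫ m₁)
        (by rw [Category.assoc]; exact ht)
      simp only [Fork.ι_ofι] at hs
      have hcond : biprod.lift t s ≫ f = 0 := by
        rw [hf, biprod.lift_desc, Preadditive.comp_neg, hs]
        simp
      refine ⟨kernel.lift f (biprod.lift t s) hcond, ?_⟩
      rw [← Category.assoc, kernel.lift_ι, biprod.lift_fst]
  -- kn
  have hknstrict : IsStrictMono ((kernel.ι f ≫ biprod.fst) ≫ m₁) := hk₁strict.comp h₁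
  -- u₁
  have hu₁ι : (biprod.inl ≫ toIm f) ≫ kernel.ι (cokernel.π f) = m₁ := by
    rw [Category.assoc, toIm_ι, hinlf]
  have hu₁strict : IsStrictMono (biprod.inl ≫ toIm f) := by
    apply isStrictMono_of_comp (g := kernel.ι (cokernel.π f))
    · rw [hu₁ι]; exact h₁
    · exact inferInstance
  -- additivity
  have ses1 := (isStrictMono_kernelι f).ses
  have hrk : R.rk M₁ + R.rk M₂ = R.rk (kernel f) + R.rk (cokernel (kernel.ι f)) := by
    have hb := R.additive _ _ (ses_biprod M₁ M₂)
    have hc := R.additive _ _ ses1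
    omega
  have hdg : dg S M₁ + dg S M₂ = dg S (kernel f) + dg S (cokernel (kernel.ι f)) := by
    have hb := dg_additive S _ _ (ses_biprod M₁ M₂)
    have hc := dg_additive S _ _ ses1
    rw [← hb, hc]
  -- Q nonzero
  have hQne : ¬ IsZero (cokernel (kernel.ι f)) := by
    intro hQ
    have hπ : cokernel.π (kernel.ι f) = 0 := hQ.eq_of_tgt _ 0
    have hf0 : f = 0 := by
      rw [← π_fromCoim f, hπ, zero_comp]
    apply hM₁
    apply isZero_of_mono_zero (N := N)
    have heq0 : (0 : M₁ ⟶ N) = m₁ := by rw [← hinlf, hf0, comp_zero]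
    rw [heq0]
    exact hm₁
  -- map Q ⟶ I
  have hqcond : kernel.ι f ≫ toIm f = 0 := by
    apply (cancel_mono (kernel.ι (cokernel.π f))).mp
    rw [Category.assoc, toIm_ι, kernel.condition, zero_comp]
  have hπqbar : cokernel.π (kernel.ι f) ≫ cokernel.desc (kernel.ι f) (toIm f) hqcond = toIm f :=
    cokernel.π_desc _ _ _
  have hqbarι : cokernel.desc (kernel.ι f) (toIm f) hqcond ≫ kernel.ι (cokernel.π f)
      = fromCoim f := by
    apply (cancel_epi (cokernel.π (kernel.ι f))).mp
    rw [← Category.assoc, hπqbar, toIm_ι, π_fromCoim]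
  have hqbarmono : Mono (cokernel.desc (kernel.ι f) (toIm f) hqcond) := by
    have hmm : Mono (cokernel.desc (kernel.ι f) (toIm f) hqcond ≫ kernel.ι (cokernel.π f)) := by
      rw [hqbarι]; exact mono_fromCoim f
    exact mono_of_mono _ (kernel.ι (cokernel.π f))
  have hqbarepi : Epi (cokernel.desc (kernel.ι f) (toIm f) hqcond) := by
    have hee : Epi (cokernel.π (kernel.ι f) ≫ cokernel.desc (kernel.ι f) (toIm f) hqcond) := by
      rw [hπqbar]; exact epi_toIm f
    exact epi_of_epi (cokernel.π (kernel.ι f)) _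
  have hIne : ¬ IsZero (kernel (cokernel.π f)) :=
    not_isZero_of_mono _ hqbarmono hQne
  have hμQI : S.μ (cokernel (kernel.ι f)) ≤ S.μ (kernel (cokernel.π f)) :=
    S.le_of_mono_epi _ hqbarmono hqbarepi hQne hIne
  refine ⟨kernel f, cokernel (kernel.ι f), kernel (cokernel.π f),
    kernel.ι f ≫ biprod.fst, (kernel.ι f ≫ biprod.fst) ≫ m₁, biprod.inl ≫ toIm f,
    kernel.ι (cokernel.π f), hk₁strict, hknstrict,
    hu₁strict, isStrictMono_kernelι _, hu₁ι, hrk, hdg, hQne, hIne, hμQI, ?_, ?_⟩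
  · intro hkeq
    have hiso : IsIso (kernel.ι f ≫ biprod.fst) := isIso_of_rk_eq hk₁strict hkeq
    refine ⟨inv (kernel.ι f ≫ biprod.fst) ≫ (kernel.ι f ≫ biprod.snd), ?_, ?_⟩
    · apply isStrictMono_of_comp (g := m₂) (hg := hm₂)
      rw [Category.assoc, ← hrel, ← Category.assoc, IsIso.inv_hom_id, Category.id_comp]
      exact h₁
    · rw [Category.assoc, ← hrel, ← Category.assoc, IsIso.inv_hom_id, Category.id_comp]
  · intro hieq
    have hiso : IsIso (biprod.inl ≫ toIm f) := isIso_of_rk_eq hu₁strict hieq.symm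
    have hwm : (-(biprod.inr ≫ toIm f ≫ inv (biprod.inl ≫ toIm f))) ≫ m₁ = m₂ := by
      have hinv : inv (biprod.inl ≫ toIm f) ≫ m₁ = kernel.ι (cokernel.π f) := by
        rw [← hu₁ι, ← Category.assoc, IsIso.inv_hom_id, Category.id_comp]
      rw [Preadditive.neg_comp, Category.assoc, Category.assoc, hinv, toIm_ι, hinrf]
      simp
    refine ⟨-(biprod.inr ≫ toIm f ≫ inv (biprod.inl ≫ toIm f)), ?_, hwm⟩
    apply isStrictMono_of_comp (g := m₁) (hg := hm₁)
    rw [hwm]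
    exact h₂

end Sum
section Bound

variable [Preadditive C] [HasFiniteBiproducts C] [HasKernels C] [HasCokernels C]
variable [IsQuasiAbelian C]

set_option linter.unusedSectionVars false
set_option maxHeartbeats 1000000

/-- The canonical bimorphism from the coimage to the image. -/
theorem coim_to_im {M N : C} (f : M ⟶ N) :
    ∃ q : cokernel (kernel.ι f) ⟶ kernel (cokernel.π f), Mono q ∧ Epi q := by
  have hqcond : kernel.ι f ≫ toIm f = 0 := by
    apply (cancel_mono (kernel.ι (cokernel.π f))).mp
    rw [Category.assoc, toIm_ι, kernel.condition, zero_comp]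
  have hπqbar : cokernel.π (kernel.ι f) ≫ cokernel.desc (kernel.ι f) (toIm f) hqcond = toIm f :=
    cokernel.π_desc _ _ _
  have hqbarι : cokernel.desc (kernel.ι f) (toIm f) hqcond ≫ kernel.ι (cokernel.π f)
      = fromCoim f := by
    apply (cancel_epi (cokernel.π (kernel.ι f))).mp
    rw [← Category.assoc, hπqbar, toIm_ι, π_fromCoim]
  refine ⟨cokernel.desc (kernel.ι f) (toIm f) hqcond, ?_, ?_⟩
  · have hmm : Mono (cokernel.desc (kernel.ι f) (toIm f) hqcond ≫ kernel.ι (cokernel.π f)) := by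
      rw [hqbarι]; exact mono_fromCoim f
    exact mono_of_mono _ (kernel.ι (cokernel.π f))
  · have hee : Epi (cokernel.π (kernel.ι f) ≫ cokernel.desc (kernel.ι f) (toIm f) hqcond) := by
      rw [hπqbar]; exact epi_toIm f
    exact epi_of_epi (cokernel.π (kernel.ι f)) _

/-- Degrees of strict subobjects are bounded above. -/
theorem dg_bound {R : RankFunction C} (S : SlopeFunction C R) (N : C) :
    ∃ b : ℚ, 0 ≤ b ∧ ∀ (M : C) (m : M ⟶ N), IsStrictMono m → dg S M ≤ b := by
  suffices h : ∀ (n : ℕ) (N : C), R.rk N = n →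
      ∃ b : ℚ, 0 ≤ b ∧ ∀ (M : C) (m : M ⟶ N), IsStrictMono m → dg S M ≤ b by
    exact h (R.rk N) N rfl
  intro n
  induction n using Nat.strong_induction_on with
  | _ n IH =>
    intro N hn
    by_cases hA : ∃ (A : C) (a : A ⟶ N), IsStrictMono a ∧ ¬ IsZero A ∧ R.rk A < R.rk N
    · obtain ⟨A, a, hstr, hAne, hAlt⟩ := hA
      have hrkApos : 0 < R.rk A := rk_pos hAne
      have hsesA := hstr.ses
      have hrkN : R.rk N = R.rk A + R.rk (cokernel a) := R.additive _ _ hsesA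
      obtain ⟨bA, hbA0, hbA⟩ := IH (R.rk A) (by omega) A rfl
      obtain ⟨bB, hbB0, hbB⟩ := IH (R.rk (cokernel a)) (by omega) (cokernel a) rfl
      refine ⟨bA + bB * (R.rk N : ℚ), by positivity, ?_⟩
      intro M m hm
      set g : M ⟶ cokernel a := m ≫ cokernel.π a with hg
      -- the intersection K = ker g as a strict subobject of A
      obtain ⟨hla⟩ := hstr.isLimitCoker
      have hcond : (kernel.ι g ≫ m) ≫ cokernel.π a = 0 := by
        rw [Category.assoc, ← hg, kernel.condition]
      obtain ⟨u, hu⟩ := KernelFork.IsLimit.lift' hla (kernel.ι g ≫ m) hcond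
      simp only [Fork.ι_ofι] at hu
      have hustrict : IsStrictMono u := by
        apply isStrictMono_of_comp (g := a) (hg := hstr.mono')
        rw [hu]
        exact (isStrictMono_kernelι g).comp hm
      have hdgK : dg S (kernel g) ≤ bA := hbA _ u hustrict
      -- short exact sequence K → M → Q
      have sesK := (isStrictMono_kernelι g).ses
      have hdgM : dg S M = dg S (kernel g) + dg S (cokernel (kernel.ι g)) :=
        dg_additive S _ _ sesK
      have hrkM : R.rk M = R.rk (kernel g) + R.rk (cokernel (kernel.ι g)) :=
        R.additive _ _ sesK
      have hrkMN : R.rk M ≤ R.rk N := rk_le_of_strictMono hm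
      -- bound dg Q
      have hdgQ : dg S (cokernel (kernel.ι g)) ≤ bB * (R.rk N : ℚ) := by
        by_cases hQz : IsZero (cokernel (kernel.ι g))
        · rw [dg_isZero S hQz]
          positivity
        · obtain ⟨qb, hqm, hqe⟩ := coim_to_im g
          have hIne : ¬ IsZero (kernel (cokernel.π g)) := not_isZero_of_mono qb hqm hQz
          have hμQI : S.μ (cokernel (kernel.ι g)) ≤ S.μ (kernel (cokernel.π g)) :=
            S.le_of_mono_epi qb hqm hqe hQz hIne
          have hdgI : dg S (kernel (cokernel.π g)) ≤ bB :=
            hbB _ (kernel.ι (cokernel.π g)) (isStrictMono_kernelι _)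
          have hμI : S.μ (kernel (cokernel.π g)) ≤ bB := mu_le_of_dg_le S hbB0 hIne hdgI
          have hμQ : S.μ (cokernel (kernel.ι g)) ≤ bB := le_trans hμQI hμI
          have hrkQle : R.rk (cokernel (kernel.ι g)) ≤ R.rk N := by omega
          have hcast : ((R.rk (cokernel (kernel.ι g)) : ℚ)) ≤ (R.rk N : ℚ) := by
            exact_mod_cast hrkQle
          have h1 : dg S (cokernel (kernel.ι g)) ≤ bB * (R.rk (cokernel (kernel.ι g)) : ℚ) := by
            simp only [dg]
            exact mul_le_mul_of_nonneg_right hμQ (by positivity)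
          have h2 : bB * ((R.rk (cokernel (kernel.ι g)) : ℚ)) ≤ bB * (R.rk N : ℚ) :=
            mul_le_mul_of_nonneg_left hcast hbB0
          linarith
      linarith
    · push_neg at hA
      refine ⟨max (dg S N) 0, le_max_right _ _, ?_⟩
      intro M m hm
      by_cases hMz : IsZero M
      · rw [dg_isZero S hMz]
        exact le_max_right _ _
      · have h1 : R.rk M ≤ R.rk N := rk_le_of_strictMono hm
        have h2 : R.rk N ≤ R.rk M := hA M m hm hMz
        have hiso : IsIso m := isIso_of_rk_eq (R := R) hm (by omega)
        have := dg_eq_of_iso S m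
        rw [this]
        exact le_max_left _ _

end Bound
section Attain

variable [Preadditive C] [HasFiniteBiproducts C] [HasKernels C] [HasCokernels C]
variable [IsQuasiAbelian C]

set_option linter.unusedSectionVars false
set_option maxHeartbeats 2000000

/-- The maximum slope among nonzero strict subobjects is attained. -/
theorem exists_max_slope {R : RankFunction C} (S : SlopeFunction C R) (N : C)
    (hN : ¬ IsZero N) :
    ∃ (M : C) (m : M ⟶ N), IsStrictMono m ∧ ¬ IsZero M ∧
      ∀ (M' : C) (m' : M' ⟶ N), IsStrictMono m' → ¬ IsZero M' → S.μ M' ≤ S.μ M := by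
  by_contra hno
  have hnomax : ∀ (M : C) (m : M ⟶ N), IsStrictMono m → ¬ IsZero M →
      ∃ (M' : C) (m' : M' ⟶ N), IsStrictMono m' ∧ ¬ IsZero M' ∧ S.μ M < S.μ M' := by
    intro M m hm hMne
    by_contra h2
    push_neg at h2
    exact hno ⟨M, m, hm, hMne, h2⟩
  -- the set of slopes, as a set of reals
  set Tr : Set ℝ := {x | ∃ (M : C) (m : M ⟶ N), IsStrictMono m ∧ ¬ IsZero M ∧
    ((S.μ M : ℝ) = x)} with hTr
  have hTne : Tr.Nonempty := ⟨(S.μ N : ℝ), N, 𝟙 N, isStrictMono_id N, hN, rfl⟩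
  obtain ⟨b, hb0, hb⟩ := dg_bound S N
  have hbdd : BddAbove Tr := by
    refine ⟨(b : ℝ), ?_⟩
    rintro x ⟨M, m, hm, hMne, rfl⟩
    have := mu_le_of_dg_le S hb0 hMne (hb M m hm)
    exact_mod_cast this
  set lam : ℝ := sSup Tr with hlam
  have hle : ∀ (M : C) (m : M ⟶ N), IsStrictMono m → ¬ IsZero M → (S.μ M : ℝ) ≤ lam :=
    fun M m hm hMne => le_csSup hbdd ⟨M, m, hm, hMne, rfl⟩
  have hlt : ∀ (M : C) (m : M ⟶ N), IsStrictMono m → ¬ IsZero M → (S.μ M : ℝ) < lam := by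
    intro M m hm hMne
    rcases lt_or_eq_of_le (hle M m hm hMne) with h | h
    · exact h
    · exfalso
      obtain ⟨M', m', hm', hM'ne, hlt'⟩ := hnomax M m hm hMne
      have h1 : (S.μ M' : ℝ) ≤ lam := hle M' m' hm' hM'ne
      have h2 : (S.μ M : ℝ) < (S.μ M' : ℝ) := by exact_mod_cast hlt'
      rw [h] at h2
      linarith
  have hex : ∀ ε : ℝ, 0 < ε → ∃ (M : C) (m : M ⟶ N), IsStrictMono m ∧ ¬ IsZero M ∧
      lam - ε < (S.μ M : ℝ) := by
    intro ε hε
    obtain ⟨x, ⟨M, m, hm, hMne, rfl⟩, hx⟩ := exists_lt_of_lt_csSup hTne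
      (by linarith : lam - ε < lam)
    exact ⟨M, m, hm, hMne, hx⟩
  -- rank sets
  set Rk : ℝ → Set ℕ := fun ε => {r | ∃ (M : C) (m : M ⟶ N), IsStrictMono m ∧ ¬ IsZero M ∧
    lam - ε < (S.μ M : ℝ) ∧ R.rk M = r} with hRk
  have hRkne : ∀ ε : ℝ, 0 < ε → (Rk ε).Nonempty := by
    intro ε hε
    obtain ⟨M, m, hm, hMne, hx⟩ := hex ε hε
    exact ⟨R.rk M, M, m, hm, hMne, hx, rfl⟩
  have hRkbdd : ∀ ε : ℝ, BddAbove (Rk ε) := by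
    intro ε
    refine ⟨R.rk N, ?_⟩
    rintro r ⟨M, m, hm, hMne, hx, rfl⟩
    exact rk_le_of_strictMono hm
  have hRkmem : ∀ ε : ℝ, 0 < ε → sSup (Rk ε) ∈ Rk ε :=
    fun ε hε => Nat.sSup_mem (hRkne ε hε) (hRkbdd ε)
  -- stabilized maximal rank
  have hRS : ({r | ∃ ε : ℝ, 0 < ε ∧ sSup (Rk ε) = r} : Set ℕ).Nonempty :=
    ⟨sSup (Rk 1), 1, one_pos, rfl⟩
  obtain ⟨ε₀, hε₀pos, hε₀⟩ := Nat.sInf_mem hRS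
  set rstar := sInf {r | ∃ ε : ℝ, 0 < ε ∧ sSup (Rk ε) = r} with hrstar
  have hstab : ∀ ε : ℝ, 0 < ε → ε ≤ ε₀ → sSup (Rk ε) = rstar := by
    intro ε hε hεle
    have h1 : rstar ≤ sSup (Rk ε) := Nat.sInf_le ⟨ε, hε, rfl⟩
    have h2 : sSup (Rk ε) ≤ rstar := by
      rw [← hε₀]
      have hsub : Rk ε ⊆ Rk ε₀ := by
        rintro r ⟨M, m, hm, hMne, hx, rfl⟩
        exact ⟨M, m, hm, hMne, by linarith, rfl⟩
      exact le_csSup (hRkbdd ε₀) (hsub (hRkmem ε hε))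
    omega
  have hrstar1 : 1 ≤ rstar := by
    obtain ⟨M, m, hm, hMne, hx, hr⟩ := hRkmem ε₀ hε₀pos
    rw [hε₀] at hr
    have := rk_pos (R := R) hMne
    omega
  -- choose two subobjects of rank rstar with slopes close to lam
  set εs : ℝ := ε₀ / (4 * rstar) with hεs
  have hrpos : (0 : ℝ) < (rstar : ℝ) := by exact_mod_cast hrstar1
  have hεspos : 0 < εs := by positivity
  have hr1R : (1 : ℝ) ≤ (rstar : ℝ) := by exact_mod_cast hrstar1
  have hεsle : εs ≤ ε₀ := by
    rw [hεs, div_le_iff₀ (by positivity)]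
    nlinarith [hε₀pos, hr1R]
  obtain ⟨M₁, m₁, hm₁, hM₁ne, hμ₁, hr₁⟩ := by
    have := hRkmem εs hεspos
    rw [hstab εs hεspos hεsle] at this
    exact this
  set ε₁ : ℝ := min εs (lam - (S.μ M₁ : ℝ)) with hε₁
  have hε₁pos : 0 < ε₁ := lt_min hεspos (by linarith [hlt M₁ m₁ hm₁ hM₁ne])
  have hε₁le : ε₁ ≤ ε₀ := le_trans (min_le_left _ _) hεsle
  obtain ⟨M₂, m₂, hm₂, hM₂ne, hμ₂, hr₂⟩ := by
    have := hRkmem ε₁ hε₁pos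
    rw [hstab ε₁ hε₁pos hε₁le] at this
    exact this
  have hμ₁₂ : S.μ M₁ < S.μ M₂ := by
    have h1 : lam - ε₁ < (S.μ M₂ : ℝ) := hμ₂
    have h2 : ε₁ ≤ lam - (S.μ M₁ : ℝ) := min_le_right _ _
    have : (S.μ M₁ : ℝ) < (S.μ M₂ : ℝ) := by linarith
    exact_mod_cast this
  -- the sum construction
  obtain ⟨K, Q, I, k₁, kn, u₁, iι, hk₁, hkn, hu₁, hiι, hu₁ι, hrk, hdg, hQne, hIne, hμQI,
    hKeq, hIeq⟩ := sum_construction S hm₁ hm₂ hM₁ne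
  -- rk K < rstar
  have hrkK : R.rk K < rstar := by
    have h1 : R.rk K ≤ R.rk M₁ := rk_le_of_strictMono hk₁
    rcases lt_or_eq_of_le h1 with h | h
    · omega
    · exfalso
      obtain ⟨v, hv, hvm⟩ := hKeq h
      have hiso : IsIso v := isIso_of_rk_eq (R := R) hv (by omega)
      have := μ_eq_of_iso S v hM₁ne
      rw [this] at hμ₁₂
      exact lt_irrefl _ hμ₁₂
  -- rk I > rstar
  have hrkI : rstar < R.rk I := by
    have h1 : R.rk M₁ ≤ R.rk I := rk_le_of_strictMono hu₁
    rcases lt_or_eq_of_le h1 with h | h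
    · omega
    · exfalso
      obtain ⟨w, hw, hwm⟩ := hIeq h.symm
      have hiso : IsIso w := isIso_of_rk_eq (R := R) hw (by omega)
      have := μ_eq_of_iso S w hM₂ne
      rw [this] at hμ₁₂
      exact lt_irrefl _ hμ₁₂
  -- numerics: μ I > lam - ε₀
  have hrkQpos : 0 < R.rk Q := rk_pos hQne
  -- real variables
  have hdgK_le : (dg S K : ℝ) ≤ lam * (R.rk K : ℝ) := by
    by_cases hKz : IsZero K
    · rw [dg_isZero S hKz]
      have : R.rk K = 0 := (R.rk_zero_iff K).mpr hKz
      rw [this]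
      simp
    · have hμK : (S.μ K : ℝ) ≤ lam := hle K kn hkn hKz
      have : (dg S K : ℝ) = (S.μ K : ℝ) * (R.rk K : ℝ) := by
        simp [dg]
      rw [this]
      exact mul_le_mul_of_nonneg_right hμK (by positivity)
  have hdg1 : (dg S M₁ : ℝ) ≥ (lam - εs) * (rstar : ℝ) := by
    have : (dg S M₁ : ℝ) = (S.μ M₁ : ℝ) * (R.rk M₁ : ℝ) := by simp [dg]
    rw [this, hr₁]
    have h2 : lam - εs ≤ (S.μ M₁ : ℝ) := le_of_lt hμ₁
    exact mul_le_mul_of_nonneg_right h2 (by positivity)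
  have hdg2 : (dg S M₂ : ℝ) ≥ (lam - εs) * (rstar : ℝ) := by
    have : (dg S M₂ : ℝ) = (S.μ M₂ : ℝ) * (R.rk M₂ : ℝ) := by simp [dg]
    rw [this, hr₂]
    have h2 : lam - εs ≤ (S.μ M₂ : ℝ) := by
      have h3 : ε₁ ≤ εs := min_le_left _ _
      have := hμ₂
      linarith
    exact mul_le_mul_of_nonneg_right h2 (by positivity)
  -- cast additivity
  have hrkR : (rstar : ℝ) + (rstar : ℝ) = (R.rk K : ℝ) + (R.rk Q : ℝ) := by
    rw [← hr₁, ← hr₂] at *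
    exact_mod_cast congrArg (fun n : ℕ => (n : ℝ)) hrk
  have hdgR : (dg S M₁ : ℝ) + (dg S M₂ : ℝ) = (dg S K : ℝ) + (S.μ Q : ℝ) * (R.rk Q : ℝ) := by
    have h1 : (dg S Q : ℝ) = (S.μ Q : ℝ) * (R.rk Q : ℝ) := by simp [dg]
    rw [← h1]
    exact_mod_cast congrArg (fun q : ℚ => (q : ℝ)) hdg
  have hq1 : (1 : ℝ) ≤ (R.rk Q : ℝ) := by exact_mod_cast hrkQpos
  -- μ Q ≥ lam - 2 εs rstar
  have hq2 : (S.μ Q : ℝ) * (R.rk Q : ℝ) ≥ lam * (R.rk Q : ℝ) - 2 * εs * (rstar : ℝ) := by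
    have e1 : (S.μ Q : ℝ) * (R.rk Q : ℝ) = (dg S M₁ : ℝ) + (dg S M₂ : ℝ) - (dg S K : ℝ) := by
      linarith [hdgR]
    have e2 : (R.rk K : ℝ) = 2 * (rstar : ℝ) - (R.rk Q : ℝ) := by linarith [hrkR]
    rw [e1]
    rw [e2] at hdgK_le
    nlinarith [hdg1, hdg2, hdgK_le]
  have hμQge : (S.μ Q : ℝ) ≥ lam - 2 * εs * (rstar : ℝ) := by
    have h3 : (2 * εs * (rstar : ℝ)) * 1 ≤ (2 * εs * (rstar : ℝ)) * (R.rk Q : ℝ) :=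
      mul_le_mul_of_nonneg_left hq1 (by positivity)
    have h4 : (lam - 2 * εs * (rstar : ℝ)) * (R.rk Q : ℝ) ≤ (S.μ Q : ℝ) * (R.rk Q : ℝ) := by
      nlinarith [hq2]
    have hqpos : (0 : ℝ) < (R.rk Q : ℝ) := by linarith
    exact le_of_mul_le_mul_right h4 hqpos
  have hεshalf : 2 * εs * (rstar : ℝ) = ε₀ / 2 := by
    rw [hεs]
    field_simp
    ring
  have hμIgt : lam - ε₀ < (S.μ I : ℝ) := by
    have h5 : (S.μ Q : ℝ) ≤ (S.μ I : ℝ) := by exact_mod_cast hμQI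
    rw [hεshalf] at hμQge
    linarith
  -- contradiction with maximality of rstar at level ε₀
  have hImem : R.rk I ∈ Rk ε₀ := ⟨I, iι, hiι, hIne, hμIgt, rfl⟩
  have : R.rk I ≤ rstar := by
    rw [← hε₀]
    exact le_csSup (hRkbdd ε₀) hImem
  omega

end Attain

/-- Every nonzero object `N` has a universal destabilizing subobject; it is unique as a
subobject of `N`, and it is semistable. -/
theorem exists_universal_destabilizing
    [Preadditive C] [HasFiniteBiproducts C] [HasKernels C] [HasCokernels C]
    [IsQuasiAbelian C] [EssentiallySmall.{v} C]
    (R : RankFunction C) (S : SlopeFunction C R)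
    (N : C) (hN : ¬ IsZero N) :
    ∃ (M : C) (m : M ⟶ N), IsUniversalDestabilizing S.μ m ∧ Semistable S.μ M ∧
      ∀ ⦃M' : C⦄ (m' : M' ⟶ N), IsUniversalDestabilizing S.μ m' →
        ∃ e : M' ≅ M, e.hom ≫ m = m' := by
  obtain ⟨Mx, mx, hmx, hMxne, hmax⟩ := exists_max_slope S N hN
  -- among subobjects of maximal slope, pick one of maximal rank
  set RankSet : Set ℕ := {r | ∃ (M : C) (m : M ⟶ N), IsStrictMono m ∧ ¬ IsZero M ∧
    S.μ M = S.μ Mx ∧ R.rk M = r} with hRankSet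
  have hRSne : RankSet.Nonempty := ⟨R.rk Mx, Mx, mx, hmx, hMxne, rfl, rfl⟩
  have hRSbdd : BddAbove RankSet := by
    refine ⟨R.rk N, ?_⟩
    rintro r ⟨M, m, hm, hMne, hμ, rfl⟩
    exact rk_le_of_strictMono hm
  obtain ⟨M, m, hm, hMne, hμM, hrM⟩ := Nat.sSup_mem hRSne hRSbdd
  have hrmax : ∀ r ∈ RankSet, r ≤ R.rk M := by
    intro r hr
    rw [hrM]
    exact le_csSup hRSbdd hr
  -- property (i)
  have hPi : ∀ ⦃M' : C⦄ (m' : M' ⟶ N), IsStrictMono m' → ¬ IsZero M' → S.μ M' ≤ S.μ M := by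
    intro M' m' hm' hM'ne
    rw [hμM]
    exact hmax M' m' hm' hM'ne
  -- property (ii)
  have hPii : ∀ ⦃M' : C⦄ (m' : M' ⟶ N), IsStrictMono m' → ¬ IsZero M' → S.μ M' = S.μ M →
      ∃ u : M' ⟶ M, u ≫ m = m' := by
    intro M' m' hm' hM'ne hμ'
    obtain ⟨K, Q, I, k₁, kn, u₁, iι, hk₁, hkn, hu₁, hiι, hu₁ι, hrk, hdg, hQne, hIne, hμQI,
      hKeq, hIeq⟩ := sum_construction S hm hm' hMne
    set lam := S.μ M with hlamdef
    have hdgK_le : dg S K ≤ lam * (R.rk K : ℚ) := by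
      by_cases hKz : IsZero K
      · rw [dg_isZero S hKz, (R.rk_zero_iff K).mpr hKz]
        simp
      · have hμK : S.μ K ≤ lam := hPi kn hkn hKz
        have heq : dg S K = S.μ K * (R.rk K : ℚ) := rfl
        rw [heq]
        exact mul_le_mul_of_nonneg_right hμK (by positivity)
    have hdgM : dg S M = lam * (R.rk M : ℚ) := rfl
    have hdgM' : dg S M' = lam * (R.rk M' : ℚ) := by
      show S.μ M' * _ = _
      rw [hμ']
    have hrkQ : (R.rk Q : ℚ) = (R.rk M : ℚ) + (R.rk M' : ℚ) - (R.rk K : ℚ) := by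
      have : (R.rk M : ℚ) + (R.rk M' : ℚ) = (R.rk K : ℚ) + (R.rk Q : ℚ) := by
        exact_mod_cast congrArg (fun n : ℕ => (n : ℚ)) hrk
      linarith
    have hdgQ_ge : dg S Q ≥ lam * (R.rk Q : ℚ) := by
      have h1 : dg S Q = dg S M + dg S M' - dg S K := by linarith [hdg]
      rw [h1, hdgM, hdgM', hrkQ]
      nlinarith [hdgK_le]
    have hrkQpos : 0 < R.rk Q := rk_pos hQne
    have hμQ_ge : lam ≤ S.μ Q := by
      have h2 : lam * (R.rk Q : ℚ) ≤ S.μ Q * (R.rk Q : ℚ) := hdgQ_ge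
      have h3 : (0 : ℚ) < (R.rk Q : ℚ) := by exact_mod_cast hrkQpos
      exact le_of_mul_le_mul_right h2 h3
    have hμI_eq : S.μ I = lam :=
      le_antisymm (hPi iι hiι hIne) (le_trans hμQ_ge hμQI)
    have hrkIle : R.rk I ≤ R.rk M := hrmax _ ⟨I, iι, hiι, hIne, by rw [hμI_eq, hμM], rfl⟩
    have hrkIge : R.rk M ≤ R.rk I := rk_le_of_strictMono hu₁
    obtain ⟨w, hw, hwm⟩ := hIeq (by omega)
    exact ⟨w, hwm⟩
  -- semistability
  have hss : Semistable S.μ M := by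
    refine ⟨hMne, ?_⟩
    intro M'' m'' hmono hne
    have hcomp : toIm m'' ≫ kernel.ι (cokernel.π m'') = m'' := toIm_ι m''
    have hmonoe : Mono (toIm m'') := by
      have h1 : Mono (toIm m'' ≫ kernel.ι (cokernel.π m'')) := by rw [hcomp]; exact hmono
      exact mono_of_mono (toIm m'') (kernel.ι (cokernel.π m''))
    have hepie : Epi (toIm m'') := epi_toIm m''
    have hI''ne : ¬ IsZero (kernel (cokernel.π m'')) := not_isZero_of_mono _ hmonoe hne
    have h2 : S.μ M'' ≤ S.μ (kernel (cokernel.π m'')) :=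
      S.le_of_mono_epi _ hmonoe hepie hne hI''ne
    have h3 : IsStrictMono (kernel.ι (cokernel.π m'') ≫ m) :=
      (isStrictMono_kernelι _).comp hm
    have h4 : S.μ (kernel (cokernel.π m'')) ≤ S.μ M := hPi _ h3 hI''ne
    exact le_trans h2 h4
  refine ⟨M, m, ⟨hm, hMne, hPi, hPii⟩, hss, ?_⟩
  -- uniqueness
  intro M' m' hud'
  obtain ⟨hsm', hne', hle', hfac'⟩ := hud'
  have hμeq : S.μ M' = S.μ M :=
    le_antisymm (hPi m' hsm' hne') (hle' m hm hMne)
  obtain ⟨u, hu⟩ := hPii m' hsm' hne' hμeq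
  obtain ⟨v, hv⟩ := hfac' m hm hMne hμeq.symm
  have huv : u ≫ v = 𝟙 M' := by
    haveI := hsm'.mono'
    apply (cancel_mono m').mp
    rw [Category.assoc, hv, hu, Category.id_comp]
  have hvu : v ≫ u = 𝟙 M := by
    haveI := hm.mono'
    apply (cancel_mono m).mp
    rw [Category.assoc, hu, hv, Category.id_comp]
  exact ⟨⟨u, v, huv, hvu⟩, hu⟩

end SlopeFiltrations
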